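/- Let M be a compact Riemannian manifold and f: M → R^2 a Lipschitz map satisfying (i) |Jf(x)| ≥ C^{-1} for a.e. x, where Jf = |df^1 ∧ df^2| is the 2-Jacobian, and (ii) sup_{z∈R^2} H^{n-2}(f^{-1}{z}) ≤ C. Then for any w ∈ R^2 and 0 < ε < 1, the composition u = v_ε(f(·) - w) (where v_ε is the standard vortex profile) satisfies E_ε(u) ≤ C_1 |log ε| + C_2, with constants C_1, C_2 depending only on f (not on ε or w). -/

import Mathlib

open MeasureTheory

noncomputable section

/-- The standard degree-one vortex profile `v_ε(z) = z/max{|z|, ε}`. -/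
def vortex (ε : ℝ) (z : EuclideanSpace ℝ (Fin 2)) : EuclideanSpace ℝ (Fin 2) :=
  if ‖z‖ ≤ ε then ε⁻¹ • z else ‖z‖⁻¹ • z

/-- The squared Hilbert–Schmidt norm of the differential of a map `ℝ² → ℝ²`. -/
def hsNormSq (v : EuclideanSpace ℝ (Fin 2) → EuclideanSpace ℝ (Fin 2))
    (z : EuclideanSpace ℝ (Fin 2)) : ℝ :=
  ∑ i : Fin 2, ‖fderiv ℝ v z (EuclideanSpace.single i 1)‖ ^ 2

/-- The Ginzburg-Landau potential `W(z) = (1/4)(1-|z|²)²`. -/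
def glW (z : EuclideanSpace ℝ (Fin 2)) : ℝ := (1 / 4) * (1 - ‖z‖ ^ 2) ^ 2

section Aux

abbrev E2 := EuclideanSpace ℝ (Fin 2)

open Set

lemma vortex_not_differentiableAt {ε : ℝ} (hε : 0 < ε) {z : E2} (hz : ‖z‖ = ε) :
    ¬ DifferentiableAt ℝ (vortex ε) z := by
  intro hdiff
  have hz0 : z ≠ 0 := by intro h; rw [h, norm_zero] at hz; linarith
  have hg : DifferentiableAt ℝ (fun t : ℝ => (1 + t) • z) 0 := by
    apply DifferentiableAt.smul_const
    exact (differentiableAt_const _).add differentiableAt_id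
  have hcomp : DifferentiableAt ℝ (fun t : ℝ => vortex ε ((1 + t) • z)) 0 := by
    have hz' : (1 + (0:ℝ)) • z = z := by simp
    exact DifferentiableAt.comp 0 (by rw [hz']; exact hdiff) hg
  have hphi : DifferentiableAt ℝ
      (fun t : ℝ => @inner ℝ E2 _ (vortex ε ((1 + t) • z)) z) 0 :=
    (hcomp.inner ℝ (differentiableAt_const z))
  have heq : (fun t : ℝ => @inner ℝ E2 _ (vortex ε ((1 + t) • z)) z)
      =ᶠ[nhds (0:ℝ)] fun t => ε + ε * min t 0 := by
    filter_upwards [Metric.ball_mem_nhds (0:ℝ) one_pos] with t ht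
    simp only [Metric.mem_ball, dist_zero_right, Real.norm_eq_abs] at ht
    have h1t : 0 < 1 + t := by cases abs_lt.mp ht; linarith
    have hnorm : ‖(1 + t) • z‖ = (1 + t) * ε := by
      rw [norm_smul, Real.norm_eq_abs, abs_of_pos h1t, hz]
    rcases le_or_gt t 0 with h | h
    · have hle : ‖(1 + t) • z‖ ≤ ε := by
        rw [hnorm]; nlinarith
      rw [min_eq_left h]
      simp only [vortex, if_pos hle]
      rw [real_inner_smul_left, real_inner_smul_left, real_inner_self_eq_norm_sq, hz]
      field_simp
    · have hle : ¬ ‖(1 + t) • z‖ ≤ ε := by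
        rw [hnorm]; push_neg; nlinarith
      rw [min_eq_right h.le]
      simp only [vortex, if_neg hle]
      rw [hnorm, real_inner_smul_left, real_inner_smul_left, real_inner_self_eq_norm_sq, hz]
      field_simp
      ring
  have hmin : DifferentiableAt ℝ (fun t : ℝ => ε + ε * min t 0) 0 :=
    (Filter.EventuallyEq.differentiableAt_iff heq).mp hphi
  have hmin2 : DifferentiableAt ℝ (fun t : ℝ => min t 0) 0 := by
    have h1 : DifferentiableAt ℝ (fun t : ℝ => ε * min t 0) 0 := by
      simpa using hmin.sub (differentiableAt_const ε)
    have h2 := h1.const_mul (ε⁻¹)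
    have h3 : (fun t : ℝ => ε⁻¹ * (ε * min t 0)) = fun t : ℝ => min t 0 := by
      funext t
      rw [← mul_assoc, inv_mul_cancel₀ (ne_of_gt hε), one_mul]
    rwa [h3] at h2
  have habs : DifferentiableAt ℝ (fun t : ℝ => |t|) 0 := by
    have h1 : (fun t : ℝ => |t|) = fun t : ℝ => t - 2 * min t 0 := by
      funext t
      rcases le_or_gt t 0 with h | h
      · rw [min_eq_left h, abs_of_nonpos h]; ring
      · rw [min_eq_right h.le, abs_of_pos h]; ring
    rw [h1]
    exact differentiableAt_id.sub (hmin2.const_mul 2)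
  exact not_differentiableAt_abs_zero habs

lemma vortex_fderiv_apply_le {ε : ℝ} (hε : 0 < ε) (z : E2) {e : E2} (he : ‖e‖ ≤ 1) :
    ‖fderiv ℝ (vortex ε) z e‖ ≤ 2 / max ε ‖z‖ := by
  rcases lt_trichotomy ‖z‖ ε with hlt | heq | hgt
  · -- inner region
    have h1 : vortex ε =ᶠ[nhds z] fun w => ε⁻¹ • w := by
      filter_upwards [Metric.ball_mem_nhds z (show (0:ℝ) < ε - ‖z‖ by linarith)] with w hw
      have : ‖w‖ ≤ ε := by
        have := norm_sub_norm_le w z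
        simp only [Metric.mem_ball, dist_eq_norm] at hw
        linarith
      simp [vortex, this]
    have hfd : HasFDerivAt (fun w : E2 => ε⁻¹ • w) (ε⁻¹ • ContinuousLinearMap.id ℝ E2) z :=
      (hasFDerivAt_id z).const_smul ε⁻¹
    rw [h1.fderiv_eq, hfd.fderiv]
    have hmax : max ε ‖z‖ = ε := max_eq_left hlt.le
    rw [hmax]
    simp only [ContinuousLinearMap.smul_apply, ContinuousLinearMap.id_apply]
    rw [norm_smul, Real.norm_eq_abs, abs_of_pos (inv_pos.mpr hε)]
    calc ε⁻¹ * ‖e‖ ≤ ε⁻¹ * 1 := by gcongr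
      _ ≤ 2 / ε := by rw [div_eq_mul_inv]; nlinarith [inv_pos.mpr hε]
  · -- sphere: not differentiable
    rw [fderiv_zero_of_not_differentiableAt (vortex_not_differentiableAt hε heq)]
    simp only [ContinuousLinearMap.zero_apply, norm_zero]
    positivity
  · -- outer region
    have hz0 : z ≠ 0 := by intro h; rw [h, norm_zero] at hgt; linarith
    have hzpos : 0 < ‖z‖ := lt_trans hε hgt
    have hN : DifferentiableAt ℝ (fun w : E2 => ‖w‖) z :=
      (contDiffAt_norm (𝕜 := ℝ) (n := 1) hz0).differentiableAt one_ne_zero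
    set D := fderiv ℝ (fun w : E2 => ‖w‖) z with hD
    have hDnorm : ‖D‖ ≤ 1 := by
      have := norm_fderiv_le_of_lipschitz ℝ (x₀ := z) (lipschitzWith_one_norm (E := E2))
      simpa using this
    have hNf : HasFDerivAt (fun w : E2 => ‖w‖) D z := hN.hasFDerivAt
    have hc : HasFDerivAt (fun w : E2 => ‖w‖⁻¹) (-(‖z‖ ^ 2)⁻¹ • D) z := by
      have := (hasFDerivAt_inv (ne_of_gt hzpos)).comp z hNf
      have heq : (ContinuousLinearMap.toSpanSingleton ℝ (-(‖z‖ ^ 2)⁻¹)).comp D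
          = -(‖z‖ ^ 2)⁻¹ • D := by
        ext v
        simp [mul_comm]
      rw [heq] at this
      exact this
    have hv : HasFDerivAt (fun w : E2 => ‖w‖⁻¹ • w)
        (‖z‖⁻¹ • ContinuousLinearMap.id ℝ E2 + (-(‖z‖ ^ 2)⁻¹ • D).smulRight z) z :=
      hc.smul (hasFDerivAt_id z)
    have h1 : vortex ε =ᶠ[nhds z] fun w => ‖w‖⁻¹ • w := by
      filter_upwards [Metric.ball_mem_nhds z (show (0:ℝ) < ‖z‖ - ε by linarith)] with w hw
      have : ε < ‖w‖ := by
        have := norm_sub_norm_le z w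
        simp only [Metric.mem_ball, dist_eq_norm'] at hw
        linarith
      simp [vortex, not_le.mpr this]
    rw [h1.fderiv_eq, hv.fderiv]
    have key : ‖(‖z‖⁻¹ • ContinuousLinearMap.id ℝ E2 + (-(‖z‖ ^ 2)⁻¹ • D).smulRight z) e‖
        ≤ ‖z‖⁻¹ * ‖e‖ + (‖z‖^2)⁻¹ * (‖D‖ * ‖e‖) * ‖z‖ := by
      simp only [ContinuousLinearMap.add_apply, ContinuousLinearMap.smul_apply,
        ContinuousLinearMap.id_apply, ContinuousLinearMap.smulRight_apply]
      refine (norm_add_le _ _).trans ?_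
      gcongr ?_ + ?_
      · rw [norm_smul, norm_inv, norm_norm]
      · rw [norm_smul, norm_smul]
        simp only [norm_neg, norm_inv]
        rw [Real.norm_eq_abs, abs_of_nonneg (by positivity : (0:ℝ) ≤ ‖z‖^2)]
        gcongr
        exact D.le_opNorm e
    refine key.trans ?_
    have h2 : (‖z‖^2)⁻¹ * (‖D‖ * ‖e‖) * ‖z‖ ≤ ‖z‖⁻¹ := by
      have h4 : ‖D‖ * ‖e‖ ≤ 1 := mul_le_one₀ hDnorm (norm_nonneg _) he
      calc (‖z‖^2)⁻¹ * (‖D‖ * ‖e‖) * ‖z‖ ≤ (‖z‖^2)⁻¹ * 1 * ‖z‖ := by gcongr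
        _ = ‖z‖⁻¹ := by field_simp
    have h3 : ‖z‖⁻¹ * ‖e‖ ≤ ‖z‖⁻¹ := by
      calc ‖z‖⁻¹ * ‖e‖ ≤ ‖z‖⁻¹ * 1 := by gcongr
        _ = ‖z‖⁻¹ := mul_one _
    have hmax : max ε ‖z‖ = ‖z‖ := max_eq_right hgt.le
    rw [hmax, div_eq_mul_inv]
    linarith

lemma hsNormSq_vortex_le {ε : ℝ} (hε : 0 < ε) (z : E2) :
    hsNormSq (vortex ε) z ≤ 8 * ((max ε ‖z‖)^2)⁻¹ := by
  have hmaxpos : 0 < max ε ‖z‖ := lt_max_of_lt_left hε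
  have hbound : ∀ i : Fin 2, ‖fderiv ℝ (vortex ε) z (EuclideanSpace.single i 1)‖ ^ 2
      ≤ (2 / max ε ‖z‖)^2 := by
    intro i
    have he : ‖EuclideanSpace.single i (1:ℝ)‖ ≤ 1 := by
      rw [EuclideanSpace.norm_single]
      simp
    have := vortex_fderiv_apply_le hε z he
    nlinarith [norm_nonneg (fderiv ℝ (vortex ε) z (EuclideanSpace.single i 1))]
  calc hsNormSq (vortex ε) z ≤ ∑ _i : Fin 2, (2 / max ε ‖z‖)^2 :=
        Finset.sum_le_sum (fun i _ => hbound i)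
    _ = 2 * (2 / max ε ‖z‖)^2 := by
        rw [Finset.sum_const]
        simp [mul_comm]
    _ = 8 * ((max ε ‖z‖)^2)⁻¹ := by
        rw [div_pow]
        field_simp
        ring

lemma glW_vortex_le {ε : ℝ} (hε : 0 < ε) (z : E2) :
    (ε^2)⁻¹ * glW (vortex ε z) ≤ (1/4) * ((max ε ‖z‖)^2)⁻¹ := by
  have hmaxpos : 0 < max ε ‖z‖ := lt_max_of_lt_left hε
  rcases le_or_gt ‖z‖ ε with h | h
  · have hmax : max ε ‖z‖ = ε := max_eq_left h
    have hu : ‖vortex ε z‖ ≤ 1 := by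
      simp only [vortex, if_pos h]
      rw [norm_smul, Real.norm_eq_abs, abs_of_pos (inv_pos.mpr hε)]
      rw [inv_mul_le_iff₀ hε, mul_one]
      exact h
    have hglW : glW (vortex ε z) ≤ 1/4 := by
      unfold glW
      have h1 : 0 ≤ ‖vortex ε z‖^2 := by positivity
      have h2 : ‖vortex ε z‖^2 ≤ 1 := by nlinarith [norm_nonneg (vortex ε z)]
      nlinarith
    rw [hmax]
    calc (ε^2)⁻¹ * glW (vortex ε z) ≤ (ε^2)⁻¹ * (1/4) := by
          gcongr
      _ = (1/4) * ((ε)^2)⁻¹ := by ring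
  · have hnorm : ‖vortex ε z‖ = 1 := by
      simp only [vortex, if_neg (not_le.mpr h)]
      rw [norm_smul, Real.norm_eq_abs, abs_of_pos (inv_pos.mpr (lt_trans hε h))]
      exact inv_mul_cancel₀ (ne_of_gt (lt_trans hε h))
    have : glW (vortex ε z) = 0 := by
      unfold glW
      rw [hnorm]
      norm_num
    rw [this, mul_zero]
    positivity

lemma radial_lintegral_le {ε : ℝ} (hε : 0 < ε) (hε1 : ε < 1) :
    ∫⁻ z in Metric.ball (0:E2) 1, ENNReal.ofReal (((max ε ‖z‖)^2)⁻¹) ∂volume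
      ≤ volume (Metric.ball (0:E2) 1) * (1 + ENNReal.ofReal (2 * |Real.log ε|)) := by
  set V := volume (Metric.ball (0:E2) 1) with hV
  set b : ℝ := (ε^2)⁻¹ with hb
  have hb1 : 1 < b := by
    rw [hb, lt_inv_comm₀ one_pos (by positivity)]
    · nlinarith
  have hmaxpos : ∀ z : E2, 0 < max ε ‖z‖ := fun z => lt_max_of_lt_left hε
  have hcont : Continuous fun z : E2 => ((max ε ‖z‖)^2)⁻¹ := by
    apply Continuous.inv₀
    · exact (continuous_const.max continuous_norm).pow 2
    · intro z; positivity
  rw [lintegral_eq_lintegral_meas_lt _ (ae_of_all _ fun z => by positivity)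
      hcont.aemeasurable]
  have hbound : ∀ t ∈ Ioi (0:ℝ),
      (volume.restrict (Metric.ball (0:E2) 1)) {z | t < ((max ε ‖z‖)^2)⁻¹}
        ≤ (Ioc (0:ℝ) 1).indicator (fun _ => V) t
          + (Ioo (1:ℝ) b).indicator (fun t => ENNReal.ofReal t⁻¹ * V) t := by
    intro t ht
    simp only [mem_Ioi] at ht
    rcases le_or_gt t 1 with h1 | h1
    · have : (volume.restrict (Metric.ball (0:E2) 1)) {z | t < ((max ε ‖z‖)^2)⁻¹} ≤ V := by
        rw [hV]
        exact (measure_mono (subset_univ _)).trans (by rw [Measure.restrict_apply_univ])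
      refine this.trans ?_
      rw [indicator_of_mem (mem_Ioc.mpr ⟨ht, h1⟩)]
      exact le_add_right le_rfl
    rcases lt_or_ge t b with h2 | h2
    · have hsub : {z : E2 | t < ((max ε ‖z‖)^2)⁻¹} ⊆ Metric.ball (0:E2) (Real.sqrt t⁻¹) := by
        intro z hz
        simp only [mem_setOf_eq] at hz
        have hmax2 : (max ε ‖z‖)^2 < t⁻¹ := by
          rw [← inv_inv ((max ε ‖z‖)^2)]
          exact inv_strictAnti₀ (by positivity) hz
        have hz2 : ‖z‖^2 ≤ (max ε ‖z‖)^2 := by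
          have := le_max_right ε ‖z‖
          nlinarith [norm_nonneg z]
        have : ‖z‖^2 < t⁻¹ := lt_of_le_of_lt hz2 hmax2
        have hzlt : ‖z‖ < Real.sqrt t⁻¹ := by
          have := Real.sqrt_lt_sqrt (by positivity) this
          rwa [Real.sqrt_sq (norm_nonneg z)] at this
        simpa [Metric.mem_ball, dist_zero_right] using hzlt
      have hmeas : (volume.restrict (Metric.ball (0:E2) 1)) {z | t < ((max ε ‖z‖)^2)⁻¹}
          ≤ ENNReal.ofReal t⁻¹ * V := by
        refine le_trans (le_trans (Measure.restrict_le_self _) (measure_mono hsub)) ?_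
        rw [Measure.addHaar_ball _ _ (Real.sqrt_nonneg _)]
        have h5 : (Real.sqrt t⁻¹) ^ Module.finrank ℝ E2 = t⁻¹ := by
          rw [finrank_euclideanSpace_fin]
          exact Real.sq_sqrt (by positivity)
        rw [h5]
      refine hmeas.trans ?_
      rw [indicator_of_mem (mem_Ioo.mpr ⟨h1, h2⟩)]
      exact le_add_left le_rfl
    · have hempty : {z : E2 | t < ((max ε ‖z‖)^2)⁻¹} = ∅ := by
        ext z
        simp only [mem_setOf_eq, mem_empty_iff_false, iff_false, not_lt]
        refine le_trans ?_ h2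
        rw [hb]
        gcongr
        exact le_max_left _ _
      rw [hempty]
      simp
  calc ∫⁻ t in Ioi 0, (volume.restrict (Metric.ball (0:E2) 1)) {z | t < ((max ε ‖z‖)^2)⁻¹}
      ≤ ∫⁻ t in Ioi 0, ((Ioc (0:ℝ) 1).indicator (fun _ => V) t
          + (Ioo (1:ℝ) b).indicator (fun t => ENNReal.ofReal t⁻¹ * V) t) := by
        exact setLIntegral_mono' measurableSet_Ioi hbound
    _ = V * volume (Ioc (0:ℝ) 1 ∩ Ioi 0) + ∫⁻ t in Ioo (1:ℝ) b, ENNReal.ofReal t⁻¹ * V := by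
        rw [lintegral_add_left]
        · congr 1
          · rw [lintegral_indicator measurableSet_Ioc _, setLIntegral_const,
              Measure.restrict_apply measurableSet_Ioc]
          · have hinter : Ioo (1:ℝ) b ∩ Ioi 0 = Ioo 1 b :=
              inter_eq_left.mpr (fun t ht => lt_trans one_pos ht.1)
            rw [lintegral_indicator measurableSet_Ioo _,
              Measure.restrict_restrict measurableSet_Ioo, hinter]
        · exact (measurable_const.indicator measurableSet_Ioc)
    _ ≤ V * 1 + ENNReal.ofReal (2 * |Real.log ε|) * V := by
        gcongr
        · exact le_of_eq (by rw [inter_eq_left.mpr (fun t ht => ht.1), Real.volume_Ioc]; simp)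
        · rw [lintegral_mul_const' _ _ (measure_ball_lt_top.ne)]
          gcongr
          have hInt : IntegrableOn (fun t : ℝ => t⁻¹) (Ioo 1 b) := by
            refine IntegrableOn.mono_set ?_ Ioo_subset_Ioc_self
            have := (intervalIntegral.intervalIntegrable_inv (μ := volume)
              (f := fun t : ℝ => t) (a := 1) (b := b)
              (fun x hx => ?_) (by fun_prop)).1
            · simpa using this
            · rw [Set.uIcc_of_le hb1.le] at hx
              exact ne_of_gt (lt_of_lt_of_le one_pos hx.1)
          rw [← ofReal_integral_eq_lintegral_ofReal hInt
            ((ae_restrict_iff' measurableSet_Ioo).mpr (ae_of_all _ (fun t ht =>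
              le_of_lt (inv_pos.mpr (lt_trans one_pos ht.1)))))]
          apply ENNReal.ofReal_le_ofReal
          rw [← integral_Ioc_eq_integral_Ioo, ← intervalIntegral.integral_of_le hb1.le]
          rw [integral_inv (by rw [Set.uIcc_of_le hb1.le]; intro h; exact absurd h.1 (by norm_num))]
          rw [div_one, hb, Real.log_inv, Real.log_pow]
          rw [abs_of_neg (Real.log_neg hε hε1)]
          push_cast
          linarith
    _ ≤ V * (1 + ENNReal.ofReal (2 * |Real.log ε|)) := by
        rw [mul_add, mul_one, mul_comm V]

end Aux

/-- Let `M` be a compact Riemannian `n`-manifold (abstracted as a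
compact metric measure space with its `(n-2)`-Hausdorff measure and its volume `vol`)
and `f : M → ℝ²` a Lipschitz map with `|Jf| ≥ C⁻¹` a.e. and
`sup_z H^{n-2}(f⁻¹{z}) ≤ C`, where `Jf` is the 2-Jacobian appearing in the coarea
formula.  Then for any `w ∈ ℝ²` and `0 < ε < 1`, the composition
`u = v_ε(f(·) - w)` has Ginzburg-Landau energy (whose density `eu` is bounded by the
chain-rule bound) at most `C₁|log ε| + C₂`, with `C₁, C₂` depending only on `f`. -/
theorem stmt7 {M : Type*} [MetricSpace M] [CompactSpace M] [MeasurableSpace M]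
    [BorelSpace M] (vol : Measure M) (n : ℕ) (hn : 2 ≤ n)
    (f : M → EuclideanSpace ℝ (Fin 2)) (K : NNReal) (hK : 0 < K)
    (hf : LipschitzWith K f)
    (Jf : M → ℝ) (hJf_meas : Measurable Jf) (hJf_nonneg : ∀ x, 0 ≤ Jf x)
    (C : ℝ) (hC : 0 < C)
    (hJf_lower : ∀ᵐ x ∂vol, C⁻¹ ≤ Jf x)
    (hfibers : ∀ z : EuclideanSpace ℝ (Fin 2),
      μH[(n : ℝ) - 2] (f ⁻¹' {z}) ≤ ENNReal.ofReal C)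
    (hcoarea : ∀ g : M → ENNReal, Measurable g →
      ∫⁻ x, g x * ENNReal.ofReal (Jf x) ∂vol
        = ∫⁻ z, (∫⁻ x in f ⁻¹' {z}, g x ∂(μH[(n : ℝ) - 2])) ∂(volume : Measure (EuclideanSpace ℝ (Fin 2)))) :
    ∃ C₁ C₂ : ℝ, 0 < C₁ ∧ 0 < C₂ ∧
      ∀ (ε : ℝ), 0 < ε → ε < 1 → ∀ (w : EuclideanSpace ℝ (Fin 2)) (eu : M → ℝ),
        (∀ x, 0 ≤ eu x) →
        (∀ x, eu x ≤ (1 / 2) * (K : ℝ) ^ 2 * hsNormSq (vortex ε) (f x - w)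
          + (ε ^ 2)⁻¹ * glW (vortex ε (f x - w))) →
        ∫ x, eu x ∂vol ≤ C₁ * |Real.log ε| + C₂ := by
  classical
  -- constants
  set A : ℝ := 4 * (K:ℝ)^2 + 1/4 with hA
  have hApos : 0 < A := by positivity
  set S : Set E2 := Set.range f with hS
  have hScompact : IsCompact S := isCompact_range hf.continuous
  have hSmeas : MeasurableSet S := hScompact.isClosed.measurableSet
  have hSfin : volume S ≠ ⊤ := hScompact.measure_lt_top.ne
  set V : ENNReal := volume (Metric.ball (0:E2) 1) with hV
  have hVfin : V ≠ ⊤ := measure_ball_lt_top.ne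
  have hVpos : 0 < V := Metric.measure_ball_pos volume 0 one_pos
  set Vr : ℝ := V.toReal with hVr
  have hVrpos : 0 < Vr := ENNReal.toReal_pos hVpos.ne' hVfin
  set Sr : ℝ := (volume S).toReal with hSr
  have hSrnonneg : 0 ≤ Sr := ENNReal.toReal_nonneg
  refine ⟨C^2 * A * (2 * Vr), C^2 * A * (Vr + Sr) + 1, by positivity, by positivity, ?_⟩
  intro ε hε hε1 w eu heu_nonneg heu_le
  have hRHSpos : 0 ≤ C^2 * A * (2 * Vr) * |Real.log ε| + (C^2 * A * (Vr + Sr) + 1) := by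
    positivity
  by_cases hInt : Integrable eu vol
  swap
  · rw [integral_undef hInt]
    exact hRHSpos
  -- pointwise bound
  have hmaxpos : ∀ z : E2, 0 < max ε ‖z‖ := fun z => lt_max_of_lt_left hε
  have hpt : ∀ x, eu x ≤ A * ((max ε ‖f x - w‖)^2)⁻¹ := by
    intro x
    have h1 := hsNormSq_vortex_le hε (f x - w)
    have h2 := glW_vortex_le hε (f x - w)
    have h3 : (1 / 2) * (K : ℝ) ^ 2 * hsNormSq (vortex ε) (f x - w)
        ≤ (1 / 2) * (K : ℝ) ^ 2 * (8 * ((max ε ‖f x - w‖)^2)⁻¹) := by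
      apply mul_le_mul_of_nonneg_left h1
      positivity
    have h4 := heu_le x
    have : (1 / 2) * (K : ℝ) ^ 2 * (8 * ((max ε ‖f x - w‖)^2)⁻¹)
        + (1/4) * ((max ε ‖f x - w‖)^2)⁻¹ = A * ((max ε ‖f x - w‖)^2)⁻¹ := by
      rw [hA]; ring
    linarith
  -- the comparison function
  set G : E2 → ENNReal := fun z => ENNReal.ofReal (A * ((max ε ‖z - w‖)^2)⁻¹) with hG
  set g : M → ENNReal := fun x => G (f x) with hg
  have hGcont : Continuous G := by
    apply ENNReal.continuous_ofReal.comp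
    apply Continuous.mul continuous_const
    apply Continuous.inv₀
    · exact ((continuous_const.max (continuous_norm.comp
        (continuous_id.sub continuous_const))).pow 2)
    · intro z; have := hmaxpos (z - w); positivity
  have hgmeas : Measurable g := (hGcont.comp hf.continuous).measurable
  -- step 1 : lintegral of eu ≤ lintegral of g
  have step1 : ∫⁻ x, ENNReal.ofReal (eu x) ∂vol ≤ ∫⁻ x, g x ∂vol := by
    apply lintegral_mono
    intro x
    exact ENNReal.ofReal_le_ofReal (hpt x)
  -- step 2 : lintegral of g ≤ C * lintegral g * Jf
  have step2 : ∫⁻ x, g x ∂vol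
      ≤ ENNReal.ofReal C * ∫⁻ x, g x * ENNReal.ofReal (Jf x) ∂vol := by
    rw [← lintegral_const_mul' _ _ ENNReal.ofReal_ne_top]
    apply lintegral_mono_ae
    filter_upwards [hJf_lower] with x hx
    have h1 : (1:ℝ) ≤ C * Jf x := by
      calc (1:ℝ) = C * C⁻¹ := (mul_inv_cancel₀ hC.ne').symm
        _ ≤ C * Jf x := by gcongr
    have h2 : (1:ENNReal) ≤ ENNReal.ofReal C * ENNReal.ofReal (Jf x) := by
      rw [← ENNReal.ofReal_mul hC.le]
      exact ENNReal.one_le_ofReal.mpr h1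
    calc g x = g x * 1 := (mul_one _).symm
      _ ≤ g x * (ENNReal.ofReal C * ENNReal.ofReal (Jf x)) := by
          exact mul_le_mul_right h2 _
      _ = ENNReal.ofReal C * (g x * ENNReal.ofReal (Jf x)) := by ring
  -- step 3 : coarea
  have step3 : ∫⁻ x, g x * ENNReal.ofReal (Jf x) ∂vol
      = ∫⁻ z, (∫⁻ x in f ⁻¹' {z}, g x ∂(μH[(n : ℝ) - 2])) ∂volume := hcoarea g hgmeas
  -- step 4 : fiber integrals
  have step4 : ∀ z : E2, (∫⁻ x in f ⁻¹' {z}, g x ∂(μH[(n : ℝ) - 2]))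
      ≤ Set.indicator S (fun z => ENNReal.ofReal C * G z) z := by
    intro z
    by_cases hz : z ∈ S
    · have hfib_meas : MeasurableSet (f ⁻¹' {z}) :=
        hf.continuous.measurable (measurableSet_singleton z)
      have hconst : ∀ᵐ x ∂(μH[(n : ℝ) - 2] : Measure M), x ∈ f ⁻¹' {z} → g x = G z := by
        apply ae_of_all
        intro x hx
        simp only [Set.mem_preimage, Set.mem_singleton_iff] at hx
        rw [hg]
        simp only
        rw [hx]
      rw [setLIntegral_congr_fun_ae hfib_meas hconst, setLIntegral_const]
      rw [Set.indicator_of_mem hz]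
      calc G z * μH[(n : ℝ) - 2] (f ⁻¹' {z}) ≤ G z * ENNReal.ofReal C := by
            exact mul_le_mul_right (hfibers z) _
        _ = ENNReal.ofReal C * G z := mul_comm _ _
    · have : f ⁻¹' {z} = ∅ := by
        rw [Set.preimage_singleton_eq_empty]
        exact hz
      rw [this]
      simp
  have step4' : ∫⁻ z, (∫⁻ x in f ⁻¹' {z}, g x ∂(μH[(n : ℝ) - 2])) ∂volume
      ≤ ENNReal.ofReal C * ∫⁻ z in S, G z ∂volume := by
    calc ∫⁻ z, (∫⁻ x in f ⁻¹' {z}, g x ∂(μH[(n : ℝ) - 2])) ∂volume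
        ≤ ∫⁻ z, Set.indicator S (fun z => ENNReal.ofReal C * G z) z ∂volume :=
          lintegral_mono step4
      _ = ∫⁻ z in S, ENNReal.ofReal C * G z ∂volume := lintegral_indicator hSmeas _
      _ = ENNReal.ofReal C * ∫⁻ z in S, G z ∂volume :=
          lintegral_const_mul' _ _ ENNReal.ofReal_ne_top
  -- step 5 : the Euclidean integral estimate
  have step5 : ∫⁻ z in S, G z ∂volume
      ≤ ENNReal.ofReal A * (V * (1 + ENNReal.ofReal (2 * |Real.log ε|)) + volume S) := by
    have hGsplit : ∀ z, G z = ENNReal.ofReal A * ENNReal.ofReal (((max ε ‖z - w‖)^2)⁻¹) := by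
      intro z
      simp only [hG]
      rw [ENNReal.ofReal_mul hApos.le]
    have step5a : ∫⁻ z in S, G z ∂volume
        = ENNReal.ofReal A * ∫⁻ z in S, ENNReal.ofReal (((max ε ‖z - w‖)^2)⁻¹) ∂volume := by
      simp_rw [hGsplit]
      exact lintegral_const_mul' _ _ ENNReal.ofReal_ne_top
    rw [step5a]
    apply mul_le_mul_right
    -- split into near ball and far part
    set F : E2 → ENNReal := fun z => ENNReal.ofReal (((max ε ‖z - w‖)^2)⁻¹) with hF
    set H : E2 → ENNReal := fun y =>
      Set.indicator (Metric.ball (0:E2) 1) (fun y => ENNReal.ofReal (((max ε ‖y‖)^2)⁻¹)) y with hH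
    have hpt2 : ∀ z, Set.indicator S F z ≤ H (z - w) + Set.indicator S (fun _ => 1) z := by
      intro z
      by_cases hz : z ∈ S
      · rw [Set.indicator_of_mem hz, Set.indicator_of_mem hz]
        by_cases hball : z ∈ Metric.ball w 1
        · have hzw : z - w ∈ Metric.ball (0:E2) 1 := by
            simpa [Metric.mem_ball, dist_eq_norm] using hball
          rw [hH]
          simp only
          rw [Set.indicator_of_mem hzw]
          exact le_add_right le_rfl
        · have hzw : (1:ℝ) ≤ ‖z - w‖ := by
            simp only [Metric.mem_ball, dist_eq_norm, not_lt] at hball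
            exact hball
          have hFz : F z ≤ 1 := by
            rw [hF]
            simp only
            rw [← ENNReal.ofReal_one]
            apply ENNReal.ofReal_le_ofReal
            rw [inv_le_one_iff₀]
            right
            nlinarith [hmaxpos (z - w), le_max_right ε ‖z - w‖]
          exact le_add_left hFz
      · rw [Set.indicator_of_notMem hz, Set.indicator_of_notMem hz]
        simp
    calc ∫⁻ z in S, F z ∂volume
        = ∫⁻ z, Set.indicator S F z ∂volume := (lintegral_indicator hSmeas _).symm
      _ ≤ ∫⁻ z, (H (z - w) + Set.indicator S (fun _ => 1) z) ∂volume := lintegral_mono hpt2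
      _ = (∫⁻ z, H (z - w) ∂volume) + ∫⁻ z, Set.indicator S (fun _ => 1) z ∂volume := by
          apply lintegral_add_right'
          exact (measurable_const.indicator hSmeas).aemeasurable
      _ = (∫⁻ y, H y ∂volume) + volume S := by
          congr 1
          · exact lintegral_sub_right_eq_self H w
          · rw [lintegral_indicator hSmeas _, setLIntegral_const, one_mul]
      _ ≤ V * (1 + ENNReal.ofReal (2 * |Real.log ε|)) + volume S := by
          gcongr
          rw [hH, lintegral_indicator Metric.isOpen_ball.measurableSet _]
          exact radial_lintegral_le hε hε1
  -- put everything together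
  have main : ∫⁻ x, ENNReal.ofReal (eu x) ∂vol
      ≤ ENNReal.ofReal (C^2 * A * (2 * Vr) * |Real.log ε| + (C^2 * A * (Vr + Sr) + 1)) := by
    have chain : ∫⁻ x, ENNReal.ofReal (eu x) ∂vol
        ≤ ENNReal.ofReal C * (ENNReal.ofReal C *
            (ENNReal.ofReal A * (V * (1 + ENNReal.ofReal (2 * |Real.log ε|)) + volume S))) := by
      calc ∫⁻ x, ENNReal.ofReal (eu x) ∂vol ≤ ∫⁻ x, g x ∂vol := step1
        _ ≤ ENNReal.ofReal C * ∫⁻ x, g x * ENNReal.ofReal (Jf x) ∂vol := step2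
        _ = ENNReal.ofReal C * ∫⁻ z, (∫⁻ x in f ⁻¹' {z}, g x ∂(μH[(n : ℝ) - 2])) ∂volume := by
            rw [step3]
        _ ≤ ENNReal.ofReal C * (ENNReal.ofReal C * ∫⁻ z in S, G z ∂volume) :=
            mul_le_mul_right step4' _
        _ ≤ ENNReal.ofReal C * (ENNReal.ofReal C *
            (ENNReal.ofReal A * (V * (1 + ENNReal.ofReal (2 * |Real.log ε|)) + volume S))) := by
            exact mul_le_mul_right (mul_le_mul_right step5 _) _
    refine chain.trans ?_
    have hVS : V * (1 + ENNReal.ofReal (2 * |Real.log ε|)) + volume S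
        = ENNReal.ofReal (Vr * (1 + 2 * |Real.log ε|) + Sr) := by
      rw [ENNReal.ofReal_add (by positivity) hSrnonneg]
      congr 1
      · rw [ENNReal.ofReal_mul hVrpos.le]
        congr 1
        · rw [hVr, ENNReal.ofReal_toReal hVfin]
        · rw [ENNReal.ofReal_add one_pos.le (by positivity), ENNReal.ofReal_one]
      · rw [hSr, ENNReal.ofReal_toReal hSfin]
    rw [hVS, ← ENNReal.ofReal_mul hApos.le, ← ENNReal.ofReal_mul hC.le,
      ← ENNReal.ofReal_mul hC.le]
    apply ENNReal.ofReal_le_ofReal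
    have : C * (C * (A * (Vr * (1 + 2 * |Real.log ε|) + Sr)))
        = C^2 * A * (2 * Vr) * |Real.log ε| + C^2 * A * (Vr + Sr) := by ring
    rw [this]
    linarith
  -- convert to Bochner integral
  rw [integral_eq_lintegral_of_nonneg_ae (ae_of_all _ heu_nonneg)
    hInt.aestronglyMeasurable]
  exact ENNReal.toReal_le_of_le_ofReal hRHSpos main
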